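/- Let Ψ = (G, ψ) be a signed graph on a connected graph G. Then the spectrum of the signed adjacency matrix A(Ψ) equals the spectrum of the adjacency matrix A(G) if and only if Ψ is balanced. (Acharya's spectral criterion.) -/

import Mathlib

/-!
The trace of `A(Φ)^k` is the sum of the gains of the closed walks of length `k`, while the
trace of `A(G)^k` counts them. For Hermitian matrices the characteristic polynomial determines
the traces of all powers, and a gain of modulus one has real part at most `1`, with equality
only for the gain `1`; so cospectrality forces every closed walk, in particular every cycle, to
have gain `1`.

Conversely, in a balanced gain graph bypassing a closed subwalk never changes the gain of a
walk, since the bypassed part closes up a cycle or runs back and forth along one edge. Hence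
every closed walk has gain `1`, the gain of a walk only depends on its ends, and the gains
`θ v` of walks from a base vertex of the component of `v` satisfy `φ i j = (θ i)⁻¹ θ j`:
`A(Φ)` is conjugate to `A(G)` by the diagonal matrix of the `θ v`.
-/

open Matrix
open scoped Classical

noncomputable section

namespace GG

variable {V : Type*}

/-- The gain of a walk: product of the gains of its oriented edges. -/
def walkGain {G : SimpleGraph V} (φ : V → V → ℂ) {u v : V} (p : G.Walk u v) : ℂ :=
  (p.darts.map (fun d => φ d.toProd.1 d.toProd.2)).prod

/-- `φ` is a `𝕋`-gain function on `G`: unit modulus on edges, inverse under reversal. -/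
def IsGain (G : SimpleGraph V) (φ : V → V → ℂ) : Prop :=
  (∀ i j, G.Adj i j → ‖φ i j‖ = 1) ∧ (∀ i j, G.Adj i j → φ j i = (φ i j)⁻¹)

/-- Adjacency matrix of a gain graph. -/
def gainAdj [Fintype V] [DecidableEq V] (G : SimpleGraph V) (φ : V → V → ℂ) :
    Matrix V V ℂ := fun i j => if G.Adj i j then φ i j else 0

/-- A gain graph is balanced if every cycle has gain 1. -/
def GBalanced (G : SimpleGraph V) (φ : V → V → ℂ) : Prop :=
  ∀ (u : V) (c : G.Walk u u), c.IsCycle → walkGain φ c = 1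

/-- All shortest paths between any pair of vertices have the same gain. -/
def DistCompatible (G : SimpleGraph V) (φ : V → V → ℂ) : Prop :=
  ∀ (s t : V) (p q : G.Walk s t), p.length = G.dist s t → q.length = G.dist s t →
    walkGain φ p = walkGain φ q

/-- The set of gains of shortest `s`-`t` paths. -/
def shortestGains (G : SimpleGraph V) (φ : V → V → ℂ) (s t : V) : Set ℂ :=
  {z | ∃ p : G.Walk s t, p.length = G.dist s t ∧ walkGain φ p = z}

/-- The element of `S` maximizing the real part, ties broken by maximal imaginary part
(correct for finite nonempty sets of gains). -/
def lexMaxGain (S : Set ℂ) : ℂ :=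
  ⟨sSup (Complex.re '' S), sSup (Complex.im '' {z ∈ S | z.re = sSup (Complex.re '' S)})⟩

/-- The element of `S` minimizing the real part, ties broken by minimal imaginary part. -/
def lexMinGain (S : Set ℂ) : ℂ :=
  ⟨sInf (Complex.re '' S), sInf (Complex.im '' {z ∈ S | z.re = sInf (Complex.re '' S)})⟩

/-- The maximum gain distance matrix `D^max_<(Φ)` with respect to a strict order `lt`. -/
def Dmax [Fintype V] [DecidableEq V] (G : SimpleGraph V) (φ : V → V → ℂ)
    (lt : V → V → Prop) : Matrix V V ℂ := fun s t =>
  if lt s t then lexMaxGain (shortestGains G φ s t) * (G.dist s t : ℂ)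
  else if lt t s then (starRingEnd ℂ) (lexMaxGain (shortestGains G φ t s)) * (G.dist s t : ℂ)
  else 0

/-- The minimum gain distance matrix `D^min_<(Φ)` with respect to a strict order `lt`. -/
def Dmin [Fintype V] [DecidableEq V] (G : SimpleGraph V) (φ : V → V → ℂ)
    (lt : V → V → Prop) : Matrix V V ℂ := fun s t =>
  if lt s t then lexMinGain (shortestGains G φ s t) * (G.dist s t : ℂ)
  else if lt t s then (starRingEnd ℂ) (lexMinGain (shortestGains G φ t s)) * (G.dist s t : ℂ)
  else 0

/-- Vertex order independence: the gain distance matrices agree for the standard order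
and its reverse. -/
def OrderIndependent [Fintype V] [DecidableEq V] [LinearOrder V] (G : SimpleGraph V)
    (φ : V → V → ℂ) : Prop :=
  Dmax G φ (· < ·) = Dmax G φ (fun a b => b < a) ∧
  Dmin G φ (· < ·) = Dmin G φ (fun a b => b < a)

/-- The largest (real) eigenvalue of a matrix. -/
def maxEig [Fintype V] [DecidableEq V] (A : Matrix V V ℂ) : ℝ :=
  sSup {r : ℝ | (r : ℂ) ∈ spectrum ℂ A}

/-- The spectral radius of a matrix. -/
def specRad [Fintype V] [DecidableEq V] (A : Matrix V V ℂ) : ℝ :=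
  sSup {r : ℝ | ∃ z ∈ spectrum ℂ A, ‖z‖ = r}

/-- The distance matrix of the underlying graph, as a complex matrix. -/
def distMatrix [Fintype V] [DecidableEq V] (G : SimpleGraph V) : Matrix V V ℂ :=
  fun i j => (G.dist i j : ℂ)

/-- Weighted gain adjacency matrix `A(Φ_w)`. -/
def wGainAdj [Fintype V] [DecidableEq V] (G : SimpleGraph V) (φ : V → V → ℂ)
    (w : V → V → ℝ) : Matrix V V ℂ := fun i j => if G.Adj i j then φ i j * (w i j : ℂ) else 0

/-- Weighted adjacency matrix `A(G_w)` of the underlying weighted graph. -/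
def wAdj [Fintype V] [DecidableEq V] (G : SimpleGraph V) (w : V → V → ℝ) :
    Matrix V V ℂ := fun i j => if G.Adj i j then (w i j : ℂ) else 0

open SimpleGraph

section WalkGain

variable {G : SimpleGraph V} {φ : V → V → ℂ}

@[simp] lemma walkGain_nil {u : V} : walkGain φ (Walk.nil : G.Walk u u) = 1 := rfl

@[simp] lemma walkGain_cons {u v w : V} (h : G.Adj u v) (p : G.Walk v w) :
    walkGain φ (Walk.cons h p) = φ u v * walkGain φ p := by
  simp [walkGain]

@[simp] lemma walkGain_append {u v w : V} (p : G.Walk u v) (q : G.Walk v w) :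
    walkGain φ (p.append q) = walkGain φ p * walkGain φ q := by
  simp [walkGain, Walk.darts_append]

@[simp] lemma walkGain_const_one {u v : V} (p : G.Walk u v) :
    walkGain (fun _ _ => 1) p = 1 := by
  simp [walkGain]

lemma IsGain.ne_zero (hφ : IsGain G φ) {i j : V} (h : G.Adj i j) : φ i j ≠ 0 :=
  norm_ne_zero_iff.mp (by simp [hφ.1 _ _ h])

lemma norm_walkGain (hφ : IsGain G φ) {u v : V} (p : G.Walk u v) : ‖walkGain φ p‖ = 1 := by
  induction p with
  | nil => simp
  | cons h p ih => simp [ih, hφ.1 _ _ h]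

lemma walkGain_reverse (hinv : ∀ i j, G.Adj i j → φ j i = (φ i j)⁻¹) {u v : V}
    (p : G.Walk u v) : walkGain φ p.reverse = (walkGain φ p)⁻¹ := by
  induction p with
  | nil => simp
  | cons h p ih => simp [Walk.reverse_cons, ih, hinv _ _ h, mul_comm]

lemma walkGain_bypass [DecidableEq V] (hφ : IsGain G φ) (hbal : GBalanced G φ) {u v : V}
    (p : G.Walk u v) : walkGain φ p.bypass = walkGain φ p := by
  induction p with
  | nil => rfl
  | @cons u x v h p ih =>
    simp only [Walk.bypass]
    split_ifs with hu
    · set q := p.bypass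
      have hq : (q.takeUntil u hu).IsPath := p.bypass_isPath.takeUntil hu
      have hloop : φ u x * walkGain φ (q.takeUntil u hu) = 1 := by
        by_cases hux : s(u, x) ∈ (q.takeUntil u hu).edges
        · rw [hq.eq_adj_toWalk_of_mem_edges (Sym2.eq_swap ▸ hux)]
          simp [hφ.2 _ _ h, hφ.ne_zero h]
        · simpa using hbal u _ ((Walk.cons_isCycle_iff _ h).mpr ⟨hq, hux⟩)
      rw [walkGain_cons, ← ih, ← q.take_spec hu, walkGain_append, ← mul_assoc, hloop,
        one_mul]
    · simp [ih]

lemma GBalanced.walkGain_eq_one (hφ : IsGain G φ) (hbal : GBalanced G φ) {u : V}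
    (c : G.Walk u u) : walkGain φ c = 1 := by
  classical
  rw [← walkGain_bypass hφ hbal,
    Walk.eq_nil_iff_nil.mpr (Walk.isPath_iff_nil.mp c.bypass_isPath), walkGain_nil]

end WalkGain

section Switching

variable {G : SimpleGraph V} {φ : V → V → ℂ}

lemma walkGain_eq_of_closed (hinv : ∀ i j, G.Adj i j → φ j i = (φ i j)⁻¹)
    (hclosed : ∀ u (c : G.Walk u u), walkGain φ c = 1) {u v : V} (p q : G.Walk u v) :
    walkGain φ p = walkGain φ q := by
  have h := hclosed u (p.append q.reverse)
  rw [walkGain_append, walkGain_reverse hinv] at h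
  exact (mul_inv_eq_one₀ (by rintro hq; simp [hq] at h)).mp h

lemma exists_potential_of_closed (hφ : IsGain G φ)
    (hclosed : ∀ u (c : G.Walk u u), walkGain φ c = 1) :
    ∃ θ : V → ℂ, (∀ v, θ v ≠ 0) ∧
      ∀ i j, G.Adj i j → φ i j = (θ i)⁻¹ * θ j := by
  have hroot (v : V) : G.Reachable (G.connectedComponentMk v).out v :=
    ConnectedComponent.exact (G.connectedComponentMk v).out_eq
  have hne {a b : V} (p : G.Walk a b) : walkGain φ p ≠ 0 := by
    simp [← norm_ne_zero_iff, norm_walkGain hφ]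
  refine ⟨fun v => walkGain φ (hroot v).some, fun v => hne _, fun i j h => ?_⟩
  -- the base vertices of `i` and `j` coincide only propositionally
  have extend {a b : V} (p : G.Walk a i) (q : G.Walk b j) (hab : a = b) :
      walkGain φ q = walkGain φ p * φ i j := by
    subst hab
    simpa using walkGain_eq_of_closed hφ.2 hclosed q (p.append (Walk.cons h Walk.nil))
  have hsame : (G.connectedComponentMk i).out = (G.connectedComponentMk j).out := by
    rw [ConnectedComponent.connectedComponentMk_eq_of_adj h]
  dsimp only
  rw [extend (hroot i).some (hroot j).some hsame, inv_mul_cancel_left₀ (hne _)]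

lemma charpoly_gainAdj_of_potential [Fintype V] [DecidableEq V] (θ : V → ℂ)
    (hθ : ∀ v, θ v ≠ 0) (h : ∀ i j, G.Adj i j → φ i j = (θ i)⁻¹ * θ j) :
    (gainAdj G φ).charpoly = (G.adjMatrix ℂ).charpoly := by
  have hconj : gainAdj G φ = diagonal θ⁻¹ * (G.adjMatrix ℂ * diagonal θ) := by
    ext i j
    by_cases hij : G.Adj i j <;> simp [gainAdj, hij, h]
  rw [hconj, charpoly_mul_comm, mul_assoc, diagonal_mul_diagonal]
  simp [mul_inv_cancel₀ (hθ _)]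

end Switching

section Spectrum

variable {n 𝕜 : Type*} [Fintype n] [DecidableEq n] [RCLike 𝕜]

lemma _root_.Matrix.IsHermitian.trace_pow {A : Matrix n n 𝕜} (hA : A.IsHermitian) (k : ℕ) :
    (A ^ k).trace = ∑ i, (hA.eigenvalues i : 𝕜) ^ k := by
  conv_lhs => rw [hA.spectral_theorem, ← map_pow, Unitary.conjStarAlgAut_apply, trace_mul_cycle,
    Unitary.star_mul_self_of_mem hA.eigenvectorUnitary.prop, one_mul, diagonal_pow, trace_diagonal]
  simp

lemma trace_pow_eq_of_charpoly_eq {A B : Matrix n n 𝕜} (hA : A.IsHermitian) (hB : B.IsHermitian)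
    (h : A.charpoly = B.charpoly) (k : ℕ) : (A ^ k).trace = (B ^ k).trace := by
  rw [hA.trace_pow, hB.trace_pow, (hA.eigenvalues_eq_eigenvalues_iff hB).mpr h]

end Spectrum

section Cospectral

variable [Fintype V] [DecidableEq V] {G : SimpleGraph V} {φ : V → V → ℂ}

lemma gainAdj_pow_apply (k : ℕ) (u v : V) :
    (gainAdj G φ ^ k) u v = ∑ p ∈ G.finsetWalkLength k u v, walkGain φ p := by
  induction k generalizing u v with
  | zero => obtain rfl | h := eq_or_ne u v <;> simp [finsetWalkLength, one_apply, *]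
  | succ k ih =>
    rw [pow_succ', mul_apply, finsetWalkLength, Finset.sum_biUnion]
    · simp only [gainAdj, ih, Finset.mul_sum, ite_mul, zero_mul, Finset.sum_ite_irrel,
        Finset.sum_const_zero, Finset.sum_ite, add_zero, Finset.sum_map]
      exact Finset.sum_subtype _ (by simp) _
    · rintro ⟨x, hx⟩ - ⟨y, hy⟩ - hxy
      rw [Function.onFun, disjoint_iff_inf_le]
      intro p hp
      simp only [Finset.inf_eq_inter, Finset.mem_inter, Finset.mem_map] at hp
      obtain ⟨⟨px, _, rfl⟩, ⟨py, hpy, hp⟩⟩ := hp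
      cases hp
      simp at hxy

lemma adjMatrix_eq_gainAdj_one : G.adjMatrix ℂ = gainAdj G (fun _ _ => 1) := by
  ext i j
  simp [gainAdj]

lemma isHermitian_gainAdj (hφ : IsGain G φ) : (gainAdj G φ).IsHermitian := by
  ext i j
  by_cases h : G.Adj i j
  · simp [gainAdj, h, h.symm, hφ.2 _ _ h, Complex.inv_def, Complex.normSq_eq_norm_sq, hφ.1 _ _ h]
  · have h' : ¬G.Adj j i := fun h' => h h'.symm
    simp [gainAdj, h, h']

lemma trace_gainAdj_pow (k : ℕ) :
    (gainAdj G φ ^ k).trace = ∑ v, ∑ p ∈ G.finsetWalkLength k v v, walkGain φ p := by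
  simp [trace, gainAdj_pow_apply]

lemma walkGain_eq_one_of_charpoly_eq (hφ : IsGain G φ)
    (h : (gainAdj G φ).charpoly = (G.adjMatrix ℂ).charpoly) {u : V} (c : G.Walk u u) :
    walkGain φ c = 1 := by
  have htr := trace_pow_eq_of_charpoly_eq (isHermitian_gainAdj hφ) (G.isHermitian_adjMatrix ℂ) h
    c.length
  rw [adjMatrix_eq_gainAdj_one, trace_gainAdj_pow, trace_gainAdj_pow] at htr
  have hsum : ∑ v, ∑ p ∈ G.finsetWalkLength c.length v v, (1 - (walkGain φ p).re) = 0 := by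
    have := congrArg Complex.re htr
    simp only [Complex.re_sum, walkGain_const_one, Complex.one_re] at this
    simp [Finset.sum_sub_distrib, this]
  have hle {a b : V} (p : G.Walk a b) : 0 ≤ 1 - (walkGain φ p).re := by
    linarith [Complex.re_le_norm (walkGain φ p), norm_walkGain hφ p]
  have hc := (Finset.sum_eq_zero_iff_of_nonneg (fun p _ => hle p)).mp
    ((Finset.sum_eq_zero_iff_of_nonneg fun v _ => Finset.sum_nonneg fun p _ => hle p).mp
      hsum u (Finset.mem_univ u)) c (mem_finsetWalkLength_iff.mpr rfl)
  have hre : (walkGain φ c).re = 1 := by linarith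
  exact Complex.ext hre (Complex.abs_re_eq_norm.mp (by rw [hre, norm_walkGain hφ c, abs_one]))

end Cospectral

theorem charpoly_gainAdj_eq_iff_gBalanced [Fintype V] [DecidableEq V] {G : SimpleGraph V}
    {φ : V → V → ℂ} (hφ : IsGain G φ) :
    (gainAdj G φ).charpoly = (G.adjMatrix ℂ).charpoly ↔ GBalanced G φ := by
  refine ⟨fun h u c _ => walkGain_eq_one_of_charpoly_eq hφ h c, fun hbal => ?_⟩
  obtain ⟨θ, hθ, hpot⟩ := exists_potential_of_closed hφ fun _ c => hbal.walkGain_eq_one hφ c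
  exact charpoly_gainAdj_of_potential θ hθ hpot

theorem acharya_criterion_general {V : Type*} [Fintype V] [DecidableEq V]
    (G : SimpleGraph V) (σ : V → V → ℝ)
    (hsgn : ∀ i j, G.Adj i j → σ i j = 1 ∨ σ i j = -1) (hsymm : ∀ i j, σ i j = σ j i) :
    (gainAdj G (fun i j => (σ i j : ℂ))).charpoly = (G.adjMatrix ℂ).charpoly ↔
      GBalanced G (fun i j => (σ i j : ℂ)) := by
  refine charpoly_gainAdj_eq_iff_gBalanced ⟨fun i j h => ?_, fun i j h => ?_⟩ <;>
    rcases hsgn i j h with hs | hs <;> simp [hs, hsymm j i]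

/-- Acharya's spectral criterion: a connected signed graph is cospectral with
its underlying graph iff it is balanced. -/
theorem acharya_criterion {V : Type*} [Fintype V] [DecidableEq V]
    (G : SimpleGraph V) (hconn : G.Connected) (σ : V → V → ℝ)
    (hsgn : ∀ i j, G.Adj i j → σ i j = 1 ∨ σ i j = -1) (hsymm : ∀ i j, σ i j = σ j i) :
    (gainAdj G (fun i j => (σ i j : ℂ))).charpoly = (G.adjMatrix ℂ).charpoly ↔
      GBalanced G (fun i j => (σ i j : ℂ)) :=
  acharya_criterion_general G σ hsgn hsymm

end GG
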